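/- arXiv:1106.0120 — 2 statements merged into one kernel-verified Lean document; each statement's English description precedes it below -/
import Mathlib

section
/- There exists a constant k_0 > 0 such that for all integers k ≥ k_0 and all reals ε > 0 and λ with 4 < λ ≤ k satisfying ε ≤ k^{-3} and ε^λ ≤ (1/e)·(2e)^{-4k}, and for all sequences m = m(n) with m/n ≤ 2^k·ln 2, the random formula Φ = Φ_k(n,m) has the following property with high probability: for every set Z ⊆ [m] with |Z| ≤ εn and every sequence i_1,…,i_l of pairwise distinct indices in [m]∖Z such that |N(Φ_{i_s}) ∩ N(Φ_{Z ∪ {i_j : 1 ≤ j < s}})| ≥ λ for all 1 ≤ s ≤ l, one has l ≤ εn. -/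
open Finset
open scoped Classical

/-- A `k`-SAT formula with `m` clauses over variables `Fin n`: each clause is an ordered
`k`-tuple of literals, a literal being a pair of a variable and a sign
(`true` = positive occurrence, `false` = negated occurrence). -/
abbrev KFormula (n m k : ℕ) := Fin m → Fin k → Fin n × Bool

/-- The probability, under the uniform distribution on `k`-SAT formulas with `m` clauses
over `n` variables, of the event `P`. -/
noncomputable def probOf (n m k : ℕ) (P : KFormula n m k → Prop) : ℝ :=
  ((Finset.univ.filter fun Φ : KFormula n m k => P Φ).card : ℝ) /
    (Fintype.card (KFormula n m k) : ℝ)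

/-- The set `N(Φ_i)` of variables occurring in clause `i`. -/
def clauseVars {n m k : ℕ} (Φ : KFormula n m k) (i : Fin m) : Finset (Fin n) :=
  Finset.image (fun j => (Φ i j).1) Finset.univ

/-- The set `N(Φ_Z)` of variables occurring in the subformula with clause indices `Z`. -/
def varsOf {n m k : ℕ} (Φ : KFormula n m k) (Z : Finset (Fin m)) : Finset (Fin n) :=
  Z.biUnion (clauseVars Φ)

/-!
If the property fails, the first `t = ⌊εn⌋ + 1` clauses of the chain together with `Z` form a
set `U` of at most `2t` clauses with `|N(Φ_U)| + ⌈λ⌉ t ≤ k |U|`, since every clause of the chain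
brings at most `k - ⌈λ⌉` new variables. Adding arbitrary clauses preserves this inequality, so
`U` may be taken of a fixed size `q`. A first-moment bound over `U` and over a variable set
`W ⊇ N(Φ_U)` of size `w = kq - ⌈λ⌉ t` bounds the failure probability by
`C(m,q) C(n,w) (w/n)^{kq} ≤ (em/q)^q e^w (w/n)^{⌈λ⌉ t}`, and the assumptions on `ε` and `λ`
make this at most `2^{-t}`.
-/

open Real Filter Topology

theorem choose_mul_div_pow_le_exp (n w : ℕ) :
    (n.choose w : ℝ) * ((w : ℝ) / n) ^ w ≤ exp w := by
  have hnw : (n : ℝ) * (w / n) ≤ w := by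
    rcases n.eq_zero_or_pos with rfl | hn
    · simp
    · rw [mul_div_cancel₀ _ (by positivity)]
  calc (n.choose w : ℝ) * ((w : ℝ) / n) ^ w
      ≤ (n : ℝ) ^ w / w.factorial * ((w : ℝ) / n) ^ w := by
        gcongr; exact Nat.choose_le_pow_div w n
    _ = ((n : ℝ) * (w / n)) ^ w / w.factorial := by rw [mul_pow]; ring
    _ ≤ (w : ℝ) ^ w / w.factorial := by gcongr
    _ ≤ exp w := pow_div_factorial_le_exp _ (by positivity) _

theorem choose_le_exp_mul_div_pow {M q : ℕ} (hq : 0 < q) (hqM : q ≤ M) :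
    (M.choose q : ℝ) ≤ (exp 1 * M / q) ^ q := by
  have hM : (0 : ℝ) < M := by exact_mod_cast hq.trans_le hqM
  have hq' : (0 : ℝ) < q := by exact_mod_cast hq
  have key := choose_mul_div_pow_le_exp M q
  rwa [← le_div_iff₀ (by positivity), ← exp_one_pow, ← div_pow, div_div_eq_mul_div] at key

section Probability

variable {n M k : ℕ}

theorem probOf_le_one (P : KFormula n M k → Prop) : probOf n M k P ≤ 1 :=
  div_le_one_of_le₀ (by exact_mod_cast card_filter_le _ _) (by positivity)

theorem probOf_false : probOf n M k (fun _ => False) = 0 := by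
  simp [probOf]

theorem probOf_mono {P Q : KFormula n M k → Prop} (h : ∀ Φ, P Φ → Q Φ) :
    probOf n M k P ≤ probOf n M k Q := by
  simp only [probOf]
  gcongr with Φ
  exact h Φ

theorem probOf_not (hn : 0 < n) (P : KFormula n M k → Prop) :
    probOf n M k (fun Φ => ¬ P Φ) = 1 - probOf n M k P := by
  have hcard : (0 : ℝ) < Fintype.card (KFormula n M k) := by
    have : Nonempty (Fin n) := ⟨⟨0, hn⟩⟩
    exact_mod_cast Fintype.card_pos
  have hsum := card_filter_add_card_filter_not (s := (univ : Finset (KFormula n M k))) P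
  rw [card_univ] at hsum
  simp only [probOf]
  rw [eq_sub_iff_add_eq, ← add_div, div_eq_one_iff_eq hcard.ne', add_comm]
  exact_mod_cast hsum

theorem probOf_exists_le_sum {ι : Type*} (s : Finset ι) (P : ι → KFormula n M k → Prop) :
    probOf n M k (fun Φ => ∃ a ∈ s, P a Φ) ≤ ∑ a ∈ s, probOf n M k (P a) := by
  simp only [probOf]
  rw [← sum_div]
  gcongr
  have hfilter : (univ.filter fun Φ : KFormula n M k => ∃ a ∈ s, P a Φ)
      = s.biUnion fun a => univ.filter (P a) := by
    ext Φ; simp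
  rw [hfilter]
  exact_mod_cast card_biUnion_le

theorem probOf_clauses_within (hn : 0 < n) (S : Finset (Fin M)) (W : Finset (Fin n)) :
    probOf n M k (fun Φ => ∀ i ∈ S, ∀ j, (Φ i j).1 ∈ W) = ((W.card : ℝ) / n) ^ (k * S.card) := by
  have hfilter : (univ.filter fun Φ : KFormula n M k => ∀ i ∈ S, ∀ j, (Φ i j).1 ∈ W)
      = Fintype.piFinset fun i =>
          if i ∈ S then Fintype.piFinset fun _ => W ×ˢ univ else univ := by
    ext Φ
    simp only [mem_filter, mem_univ, true_and, Fintype.mem_piFinset]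
    refine ⟨fun h i => ?_, fun h i hi j => ?_⟩
    · split_ifs with hi
      · simpa [Fintype.mem_piFinset] using h i hi
      · exact mem_univ _
    · have hΦi := h i
      rw [if_pos hi, Fintype.mem_piFinset] at hΦi
      exact (mem_product.1 (hΦi j)).1
  simp only [probOf]
  rw [hfilter, Fintype.card_piFinset, Fintype.card_pi]
  push_cast
  rw [← prod_div_distrib]
  calc ∏ i, ((if i ∈ S then Fintype.piFinset fun _ : Fin k => W ×ˢ (univ : Finset Bool)
          else univ).card : ℝ) / (Fintype.card (Fin k → Fin n × Bool) : ℝ)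
      = ∏ i, if i ∈ S then ((W.card : ℝ) / n) ^ k else 1 := by
        refine prod_congr rfl fun i _ => ?_
        split_ifs
        · simp [card_product, div_pow, mul_pow, mul_div_mul_right]
        · simp [hn.ne']
    _ = ((W.card : ℝ) / n) ^ (k * S.card) := by
        rw [prod_ite_mem, univ_inter, prod_const, ← pow_mul]

theorem probOf_exists_clauses_within_le (hn : 0 < n) (q w : ℕ) :
    probOf n M k (fun Φ => ∃ U ∈ powersetCard q univ, ∃ W ∈ powersetCard w univ,
      ∀ i ∈ U, ∀ j, (Φ i j).1 ∈ W) ≤ M.choose q * n.choose w * ((w : ℝ) / n) ^ (k * q) :=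
  calc _ ≤ ∑ U ∈ powersetCard q univ, ∑ W ∈ powersetCard w univ,
          probOf n M k (fun Φ => ∀ i ∈ U, ∀ j, (Φ i j).1 ∈ W) :=
        (probOf_exists_le_sum _ _).trans (sum_le_sum fun U _ => probOf_exists_le_sum _ _)
    _ = ∑ U ∈ powersetCard q (univ : Finset (Fin M)),
          ∑ W ∈ powersetCard w (univ : Finset (Fin n)), ((w : ℝ) / n) ^ (k * q) :=
        sum_congr rfl fun U hU => sum_congr rfl fun W hW => by
          rw [probOf_clauses_within hn, (mem_powersetCard.1 hU).2, (mem_powersetCard.1 hW).2]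
    _ = M.choose q * n.choose w * ((w : ℝ) / n) ^ (k * q) := by
        simp only [sum_const, card_powersetCard, card_univ, Fintype.card_fin, nsmul_eq_mul]
        ring

end Probability

section Variables

variable {n M k : ℕ} (Φ : KFormula n M k)

theorem card_clauseVars_le (i : Fin M) : (clauseVars Φ i).card ≤ k :=
  card_image_le.trans_eq (card_fin k)

theorem card_varsOf_le (S : Finset (Fin M)) : (varsOf Φ S).card ≤ k * S.card :=
  (card_biUnion_le_card_mul S _ k fun i _ => card_clauseVars_le Φ i).trans_eq (mul_comm _ _)

theorem card_varsOf_insert_add_le {i : Fin M} {S : Finset (Fin M)} {L : ℕ}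
    (h : L ≤ (clauseVars Φ i ∩ varsOf Φ S).card) :
    (varsOf Φ (insert i S)).card + L ≤ (varsOf Φ S).card + k := by
  have hunion := card_union_add_card_inter (clauseVars Φ i) (varsOf Φ S)
  have hi := card_clauseVars_le Φ i
  rw [varsOf, biUnion_insert, ← varsOf]
  omega

theorem card_varsOf_prefix_add_le {Z : Finset (Fin M)} {l L : ℕ} {i : Fin l → Fin M}
    (hstep : ∀ s : Fin l,
      L ≤ (clauseVars Φ (i s) ∩ varsOf Φ (Z ∪ (univ.filter fun j => j < s).image i)).card)
    {s : ℕ} (hs : s ≤ l) :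
    (varsOf Φ (Z ∪ (univ.filter fun j : Fin l => (j : ℕ) < s).image i)).card + L * s
      ≤ k * Z.card + k * s := by
  induction s with
  | zero => simpa using card_varsOf_le Φ Z
  | succ s ih =>
    have hprefix : (univ.filter fun j : Fin l => (j : ℕ) < s + 1)
        = insert ⟨s, hs⟩ (univ.filter fun j : Fin l => (j : ℕ) < s) := by
      ext j; simp only [mem_filter, mem_univ, true_and, mem_insert, Fin.ext_iff]; omega
    have hnew := card_varsOf_insert_add_le Φ (hstep ⟨s, hs⟩)
    rw [hprefix, image_insert, union_insert]
    have hprev := ih (by omega)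
    simp only [Fin.lt_def] at hnew
    rw [Nat.mul_succ, Nat.mul_succ]
    omega

theorem exists_card_eq_card_varsOf_add_le {U : Finset (Fin M)} {c q : ℕ}
    (h : (varsOf Φ U).card + c ≤ k * U.card) (hUq : U.card ≤ q) (hqM : q ≤ M) :
    ∃ U' : Finset (Fin M), U'.card = q ∧ (varsOf Φ U').card + c ≤ k * q := by
  obtain ⟨U', hUU', -, hU'q⟩ :=
    exists_subsuperset_card_eq (subset_univ U) hUq (by simpa using hqM)
  refine ⟨U', hU'q, ?_⟩
  have hsplit : varsOf Φ U' = varsOf Φ U ∪ varsOf Φ (U' \ U) := by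
    rw [varsOf, varsOf, varsOf, ← union_biUnion, union_sdiff_of_subset hUU']
  have hnew := card_varsOf_le Φ (U' \ U)
  rw [card_sdiff_of_subset hUU', hU'q] at hnew
  have hU' : (varsOf Φ U').card ≤ (varsOf Φ U).card + k * (q - U.card) := by
    rw [hsplit]
    exact (card_union_le _ _).trans (Nat.add_le_add_left hnew _)
  have hkU : k * U.card ≤ k * q := Nat.mul_le_mul_left k hUq
  rw [Nat.mul_sub] at hU'
  omega

theorem exists_clauses_within {U : Finset (Fin M)} {w : ℕ} (h : (varsOf Φ U).card ≤ w)
    (hw : w ≤ n) : ∃ W ∈ powersetCard w (univ : Finset (Fin n)), ∀ i ∈ U, ∀ j, (Φ i j).1 ∈ W := by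
  obtain ⟨W, hUW, -, hWw⟩ := exists_subsuperset_card_eq (subset_univ _) h (by simpa using hw)
  refine ⟨W, mem_powersetCard.2 ⟨subset_univ W, hWw⟩, fun i hi j => hUW ?_⟩
  exact mem_biUnion.2 ⟨i, hi, mem_image.2 ⟨j, mem_univ j, rfl⟩⟩

end Variables

def CoreExpansion {n M k : ℕ} (ε lam : ℝ) (Φ : KFormula n M k) : Prop :=
  ∀ Z : Finset (Fin M), (Z.card : ℝ) ≤ ε * n →
    ∀ (l : ℕ) (i : Fin l → Fin M), Function.Injective i → (∀ s, i s ∉ Z) →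
      (∀ s : Fin l, lam ≤ ((clauseVars Φ (i s) ∩
        varsOf Φ (Z ∪ (univ.filter fun j : Fin l => j < s).image i)).card : ℝ)) →
      (l : ℝ) ≤ ε * n

theorem exists_card_varsOf_add_le_of_not_coreExpansion {n M k : ℕ} {ε lam : ℝ}
    {Φ : KFormula n M k} (hεn : 0 ≤ ε * n) (hΦ : ¬ CoreExpansion ε lam Φ) :
    ∃ U : Finset (Fin M), ⌊ε * n⌋₊ + 1 ≤ U.card ∧ U.card ≤ 2 * ⌊ε * n⌋₊ + 1 ∧
      (varsOf Φ U).card + ⌈lam⌉₊ * (⌊ε * n⌋₊ + 1) ≤ k * U.card := by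
  simp only [CoreExpansion, not_forall, not_le] at hΦ
  obtain ⟨Z, hZ, l, i, hinj, hout, hstep, hl⟩ := hΦ
  have hZ' : Z.card ≤ ⌊ε * n⌋₊ := Nat.le_floor hZ
  have htl : ⌊ε * n⌋₊ + 1 ≤ l := (Nat.floor_lt hεn).2 hl
  set T := (univ.filter fun j : Fin l => (j : ℕ) < ⌊ε * n⌋₊ + 1).image i
  have hT : T.card = ⌊ε * n⌋₊ + 1 := by
    rw [card_image_of_injective _ hinj, Fin.card_filter_val_lt, min_eq_right htl]
  have hZT : Disjoint Z T := disjoint_right.2 fun x hx => by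
    obtain ⟨j, -, rfl⟩ := mem_image.1 hx
    exact hout j
  have hU : (Z ∪ T).card = Z.card + (⌊ε * n⌋₊ + 1) := by rw [card_union_of_disjoint hZT, hT]
  have hchain := card_varsOf_prefix_add_le Φ (fun s => Nat.ceil_le.2 (hstep s)) htl
  refine ⟨Z ∪ T, by omega, by omega, ?_⟩
  rwa [hU, Nat.mul_add k]

theorem exists_clauses_within_of_not_coreExpansion {n M k q : ℕ} {ε lam : ℝ}
    {Φ : KFormula n M k} (hεn : 0 ≤ ε * n) (hΦ : ¬ CoreExpansion ε lam Φ) (hqM : q ≤ M)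
    (hq : min (2 * ⌊ε * n⌋₊ + 1) M ≤ q) (hwn : k * q - ⌈lam⌉₊ * (⌊ε * n⌋₊ + 1) ≤ n) :
    ∃ U ∈ powersetCard q univ, ∃ W ∈ powersetCard (k * q - ⌈lam⌉₊ * (⌊ε * n⌋₊ + 1)) univ,
      ∀ i ∈ U, ∀ j, (Φ i j).1 ∈ W := by
  obtain ⟨U, -, hU2, hU⟩ := exists_card_varsOf_add_le_of_not_coreExpansion hεn hΦ
  have hUM : U.card ≤ M := card_le_univ U |>.trans_eq (card_fin M)
  obtain ⟨U', hU'q, hU'⟩ :=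
    exists_card_eq_card_varsOf_add_le Φ hU ((le_min hU2 hUM).trans hq) hqM
  obtain ⟨W, hW, hUW⟩ := exists_clauses_within Φ (Nat.le_sub_of_add_le hU') hwn
  exact ⟨U', mem_powersetCard.2 ⟨subset_univ U', hU'q⟩, W, hW, hUW⟩

theorem log_le_div_32_of_4096_le {x : ℝ} (hx : 4096 ≤ x) : log x ≤ x / 32 := by
  have h := log_le_rpow_div (x := x) (by linarith) (by norm_num : (0 : ℝ) < 1 / 2)
  rw [← sqrt_eq_rpow] at h
  have h64 : 64 ≤ √x := by
    rw [show (64 : ℝ) = √4096 by rw [show (4096 : ℝ) = 64 ^ 2 by norm_num, sqrt_sq (by norm_num)]]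
    exact sqrt_le_sqrt hx
  have hsq := sq_sqrt (show 0 ≤ x by linarith)
  nlinarith

theorem expansion_rate_le_half {k L : ℕ} {ε lam : ℝ} (hk : 4096 ≤ k) (hL : 5 ≤ L) (hLk : L ≤ k)
    (hlamL : lam ≤ L) (hε : 0 < ε) (hεk : ε ≤ ((k : ℝ) ^ 3)⁻¹)
    (hεlam : ε ^ lam ≤ (exp 1)⁻¹ * ((2 * exp 1) ^ (4 * k))⁻¹) :
    (exp 1 * 2 ^ k * log 2 / ε) ^ 2 * exp 1 ^ (2 * k - L) * (3 * k * ε) ^ L ≤ 1 / 2 := by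
  have hk' : (4096 : ℝ) ≤ k := by exact_mod_cast hk
  have hL' : (5 : ℝ) ≤ L := by exact_mod_cast hL
  have hLk' : (L : ℝ) ≤ k := by exact_mod_cast hLk
  have hlog2 : 0.6931 ≤ log 2 := by linarith [log_two_gt_d9]
  have hlog2' : log 2 ≤ 0.6932 := by linarith [log_two_lt_d9]
  have hlog3 : 1 ≤ log 3 := by
    rw [← log_exp 1]; exact log_le_log (exp_pos 1) (by linarith [exp_one_lt_d9])
  have hlog3' : log 3 ≤ 2 * log 2 := by
    rw [← log_rpow two_pos]; exact log_le_log (by norm_num) (by norm_num)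
  have hklog2 : 0.6931 * (k : ℝ) ≤ k * log 2 := by nlinarith
  have hklog2' : (k : ℝ) * log 2 ≤ 0.6932 * k := by nlinarith
  have hloglog2 : log (log 2) ≤ 0 := log_nonpos (log_nonneg one_le_two) (by linarith)
  have hlogk : 0 < log k := log_pos (by linarith)
  have hlogk' : log k ≤ k / 32 := log_le_div_32_of_4096_le hk'
  have hεk' : log ε ≤ -(3 * log k) := by
    have := log_le_log hε hεk
    rwa [log_inv, log_pow, Nat.cast_ofNat] at this
  have hεlam' : lam * log ε ≤ -(1 + 4 * k * (log 2 + 1)) := by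
    have := log_le_log (rpow_pos_of_pos hε lam) hεlam
    rw [log_rpow hε, log_mul (by positivity) (by positivity), log_inv, log_inv, log_exp,
      log_pow, log_mul two_ne_zero (exp_ne_zero 1), log_exp, Nat.cast_mul, Nat.cast_ofNat] at this
    linarith
  have hlogε : log ε < 0 := hεk'.trans_lt (by linarith)
  rw [← log_le_log_iff (by positivity) (by norm_num), log_mul (by positivity) (by positivity),
    log_mul (by positivity) (by positivity), log_pow, log_pow, log_pow, log_div (by positivity)
    hε.ne', log_mul (by positivity) (by positivity), log_mul (by positivity) (by positivity),
    log_mul (by positivity) hε.ne', log_mul (by norm_num) (by positivity), log_exp, log_pow,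
    one_div, log_inv, Nat.cast_sub (by omega)]
  push_cast
  -- For `L ≤ 6` the exponent `L - 2` of `ε` is at least `3λ/5`; for larger `L`, a third of it
  -- absorbs `k ^ L` through `ε ≤ k⁻³` and the rest is bounded through `ε ^ λ`.
  rcases le_or_gt L 6 with hL6 | hL7
  · have h1 : ((L : ℝ) - 2 - 3 / 5 * lam) * log ε ≤ 0 :=
      mul_nonpos_of_nonneg_of_nonpos (by linarith) hlogε.le
    have h2 : (L : ℝ) * (log 3 + log k) ≤ 6 * (2 * log 2 + k / 32) :=
      mul_le_mul (by exact_mod_cast hL6) (by linarith) (by linarith) (by norm_num)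
    linarith
  · have hL7' : (7 : ℝ) ≤ L := by exact_mod_cast hL7
    have h1 : ((L : ℝ) / 3 - 2) * log ε ≤ ((L : ℝ) / 3 - 2) * (-(3 * log k)) :=
      mul_le_mul_of_nonneg_left hεk' (by linarith)
    have h2 : (2 * (L : ℝ) / 3 - 2 / 3 * lam) * log ε ≤ 0 :=
      mul_nonpos_of_nonneg_of_nonpos (by linarith) hlogε.le
    have h3 : (L : ℝ) * (log 3 - 1) ≤ k * (2 * log 2 - 1) :=
      mul_le_mul hLk' (by linarith) (by linarith) (by linarith)
    linarith

theorem choose_mul_choose_mul_pow_le_half_pow {k L n M q t w : ℕ} {ε lam : ℝ} (hk : 4096 ≤ k)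
    (hL : 5 ≤ L) (hLk : L ≤ k) (hlamL : lam ≤ L) (hε : 0 < ε)
    (hεk : ε ≤ ((k : ℝ) ^ 3)⁻¹) (hεlam : ε ^ lam ≤ (exp 1)⁻¹ * ((2 * exp 1) ^ (4 * k))⁻¹)
    (hn : 0 < n) (ht : 0 < t) (htq : t ≤ q) (hq : q ≤ 2 * t) (hqM : q ≤ M)
    (hw : w + L * t = k * q) (hwn : (w : ℝ) ≤ 3 * k * ε * n)
    (hM : (M : ℝ) ≤ 2 ^ k * log 2 * n) (hεt : ε * n < t) :
    (M.choose q : ℝ) * n.choose w * ((w : ℝ) / n) ^ (k * q) ≤ (1 / 2) ^ t := by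
  set B := exp 1 * 2 ^ k * log 2 / ε
  have hq0 : (0 : ℝ) < q := by exact_mod_cast ht.trans_le htq
  have hMq : (M.choose q : ℝ) ≤ B ^ (2 * t) := by
    have hqM' : (q : ℝ) ≤ M := by exact_mod_cast hqM
    have htq' : (t : ℝ) ≤ q := by exact_mod_cast htq
    have hbase : 1 ≤ exp 1 * M / q := by
      rw [le_div_iff₀ hq0]; nlinarith [add_one_le_exp (1 : ℝ)]
    have hB : exp 1 * M / q ≤ B := by
      rw [div_le_div_iff₀ hq0 hε]
      have : (M : ℝ) * ε ≤ 2 ^ k * log 2 * q := by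
        have h2 : (0 : ℝ) ≤ 2 ^ k * log 2 := by positivity
        nlinarith
      nlinarith [exp_pos 1]
    calc (M.choose q : ℝ) ≤ (exp 1 * M / q) ^ q := choose_le_exp_mul_div_pow (ht.trans_le htq) hqM
      _ ≤ (exp 1 * M / q) ^ (2 * t) := pow_le_pow_right₀ hbase hq
      _ ≤ B ^ (2 * t) := pow_le_pow_left₀ (by positivity) hB _
  have hnw : (n.choose w : ℝ) * ((w : ℝ) / n) ^ (k * q)
      ≤ exp 1 ^ ((2 * k - L) * t) * (3 * k * ε) ^ (L * t) := by
    have hwn' : (w : ℝ) / n ≤ 3 * k * ε := by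
      rw [div_le_iff₀ (by exact_mod_cast hn)]; exact hwn
    have hw2 : w ≤ (2 * k - L) * t := by
      have : k * q ≤ 2 * k * t := by nlinarith
      rw [Nat.sub_mul]
      omega
    calc (n.choose w : ℝ) * ((w : ℝ) / n) ^ (k * q)
        = (n.choose w * ((w : ℝ) / n) ^ w) * ((w : ℝ) / n) ^ (L * t) := by
          rw [← hw, pow_add, mul_assoc]
      _ ≤ exp 1 ^ w * (3 * k * ε) ^ (L * t) := by
          rw [exp_one_pow]
          gcongr
          exact choose_mul_div_pow_le_exp n w
      _ ≤ exp 1 ^ ((2 * k - L) * t) * (3 * k * ε) ^ (L * t) := by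
          gcongr
          exact one_le_exp zero_le_one
  calc (M.choose q : ℝ) * n.choose w * ((w : ℝ) / n) ^ (k * q)
      ≤ B ^ (2 * t) * (exp 1 ^ ((2 * k - L) * t) * (3 * k * ε) ^ (L * t)) := by
        rw [mul_assoc]; gcongr
    _ = (B ^ 2 * exp 1 ^ (2 * k - L) * (3 * k * ε) ^ L) ^ t := by
        simp only [pow_mul, mul_pow]; ring
    _ ≤ (1 / 2) ^ t := by
        gcongr
        exact expansion_rate_le_half hk hL hLk hlamL hε hεk hεlam

theorem probOf_not_coreExpansion_le {n M k : ℕ} {ε lam : ℝ} (hk : 4096 ≤ k) (hε : 0 < ε)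
    (hlam : 4 < lam) (hlamk : lam ≤ k) (hεk : ε ≤ ((k : ℝ) ^ 3)⁻¹)
    (hεlam : ε ^ lam ≤ (exp 1)⁻¹ * ((2 * exp 1) ^ (4 * k))⁻¹)
    (hM : (M : ℝ) ≤ 2 ^ k * log 2 * n) (hkn : (k : ℝ) ≤ ε * n) :
    probOf n M k (fun Φ => ¬ CoreExpansion ε lam Φ) ≤ (1 / 2) ^ (⌊ε * n⌋₊ + 1) := by
  set z := ⌊ε * n⌋₊
  set L := ⌈lam⌉₊
  have hk' : (4096 : ℝ) ≤ k := by exact_mod_cast hk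
  have hεn : 1 ≤ ε * n := by linarith
  have hn : 0 < n := Nat.pos_of_ne_zero fun h => by norm_num [h] at hεn
  have hz : (z : ℝ) ≤ ε * n := Nat.floor_le (by linarith)
  have hL : 5 ≤ L := Nat.lt_ceil.2 (by exact_mod_cast hlam)
  have hLk : L ≤ k := Nat.ceil_le.2 hlamk
  rcases lt_or_ge M (z + 1) with hMz | hzM
  · calc probOf n M k (fun Φ => ¬ CoreExpansion ε lam Φ) ≤ probOf n M k (fun _ => False) :=
          probOf_mono fun Φ hΦ => by
            obtain ⟨U, hU, -⟩ := exists_card_varsOf_add_le_of_not_coreExpansion (by linarith) hΦ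
            exact absurd (hU.trans (card_le_univ U |>.trans_eq (card_fin M))) (by omega)
      _ ≤ _ := by rw [probOf_false]; positivity
  set q := min (2 * z + 1) M
  set w := k * q - L * (z + 1)
  have hzq : z + 1 ≤ q := le_min (by omega) hzM
  have hw : (w : ℝ) ≤ 3 * k * ε * n := by
    have : w ≤ k * (2 * z + 1) := (Nat.sub_le _ _).trans (Nat.mul_le_mul_left k (min_le_left _ _))
    calc (w : ℝ) ≤ k * (2 * z + 1) := by exact_mod_cast this
      _ ≤ k * (2 * (ε * n) + ε * n) := by gcongr
      _ = 3 * k * ε * n := by ring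
  have hwn : w ≤ n := by
    have h3kε : 3 * k * ε ≤ 1 := by
      calc 3 * k * ε ≤ 3 * k * ((k : ℝ) ^ 3)⁻¹ := by gcongr
        _ = 3 / k ^ 2 := by field_simp
        _ ≤ 1 := by rw [div_le_one (by positivity)]; nlinarith
    have : (w : ℝ) ≤ n := hw.trans (by nlinarith)
    exact_mod_cast this
  calc probOf n M k (fun Φ => ¬ CoreExpansion ε lam Φ)
      ≤ probOf n M k (fun Φ => ∃ U ∈ powersetCard q univ,
          ∃ W ∈ powersetCard w univ, ∀ i ∈ U, ∀ j, (Φ i j).1 ∈ W) :=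
        probOf_mono fun Φ hΦ =>
          exists_clauses_within_of_not_coreExpansion (by linarith) hΦ (min_le_right _ _) le_rfl hwn
    _ ≤ M.choose q * n.choose w * ((w : ℝ) / n) ^ (k * q) := probOf_exists_clauses_within_le hn q w
    _ ≤ (1 / 2) ^ (z + 1) :=
        choose_mul_choose_mul_pow_le_half_pow hk hL hLk (Nat.le_ceil lam) hε hεk hεlam hn
          z.succ_pos hzq (by omega) (min_le_right _ _)
          (Nat.sub_add_cancel (Nat.mul_le_mul hLk hzq)) hw hM
          (by exact_mod_cast Nat.lt_floor_add_one (ε * n))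

/-- **Lemma 2.4.** There is `k₀ > 0` such that for all `k ≥ k₀`, all reals `ε > 0` and
`4 < λ ≤ k` with `ε ≤ k⁻³` and `ε^λ ≤ e⁻¹ (2e)^{-4k}`, and all `m = m(n)` with
`m/n ≤ 2^k ln 2`, whp: for every `Z ⊆ [m]` with `|Z| ≤ εn` and every sequence
`i_1,…,i_l` of pairwise distinct indices in `[m] ∖ Z` such that
`|N(Φ_{i_s}) ∩ N(Φ_{Z ∪ {i_j : j < s}})| ≥ λ` for all `s`, one has `l ≤ εn`. -/
theorem whp_core_expansion :
    ∃ k0 : ℕ, 0 < k0 ∧ ∀ k : ℕ, k0 ≤ k →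
      ∀ ε lam : ℝ, 0 < ε → 4 < lam → lam ≤ k →
        ε ≤ ((k : ℝ) ^ 3)⁻¹ →
        ε ^ lam ≤ (Real.exp 1)⁻¹ * ((2 * Real.exp 1) ^ (4 * k))⁻¹ →
        ∀ m : ℕ → ℕ, (∀ n : ℕ, (m n : ℝ) / n ≤ 2 ^ k * Real.log 2) →
          Filter.Tendsto
            (fun n : ℕ =>
              probOf n (m n) k (fun Φ =>
                ∀ Z : Finset (Fin (m n)), (Z.card : ℝ) ≤ ε * n →
                  ∀ (l : ℕ) (i : Fin l → Fin (m n)),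
                    Function.Injective i →
                    (∀ s, i s ∉ Z) →
                    (∀ s : Fin l,
                      lam ≤ ((clauseVars Φ (i s) ∩
                        varsOf Φ (Z ∪ (Finset.univ.filter fun j : Fin l => j < s).image i)).card : ℝ)) →
                    (l : ℝ) ≤ ε * n))
            Filter.atTop (nhds 1) := by
  refine ⟨4096, by norm_num, fun k hk ε lam hε hlam hlamk hεk hεlam m hm => ?_⟩
  have hεn : Tendsto (fun n : ℕ => ε * n) atTop atTop :=
    tendsto_natCast_atTop_atTop.const_mul_atTop hε
  have hsmall : Tendsto (fun n : ℕ => 1 - (1 / 2 : ℝ) ^ (⌊ε * n⌋₊ + 1)) atTop (𝓝 1) := by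
    have hpow := tendsto_pow_atTop_nhds_zero_of_lt_one (by norm_num) (by norm_num : (1 / 2 : ℝ) < 1)
    simpa using tendsto_const_nhds.sub
      (hpow.comp ((tendsto_add_atTop_nat 1).comp (tendsto_nat_floor_atTop.comp hεn)))
  refine tendsto_of_tendsto_of_tendsto_of_le_of_le' hsmall tendsto_const_nhds ?_
    (Eventually.of_forall fun n => probOf_le_one _)
  filter_upwards [hεn.eventually_ge_atTop (k : ℝ), eventually_gt_atTop 0] with n hkn hn
  have hM : (m n : ℝ) ≤ 2 ^ k * log 2 * n := (div_le_iff₀ (by positivity)).1 (hm n)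
  have hfail := probOf_not_coreExpansion_le hk hε hlam hlamk hεk hεlam hM hkn
  rw [probOf_not hn] at hfail
  change _ ≤ probOf n (m n) k (CoreExpansion ε lam)
  linarith
end

section
/- Let k ≥ 3, n > 1, m ≥ 1, let Z, I ⊆ [m] be disjoint sets of clause indices, and let Y ⊆ V be a set of variables. For the random formula Φ = Φ_k(n,m), the probability of the event that N(Φ_i) ⊆ N(Φ_Z) ∪ Y for all i ∈ I is at most ((k·|Z| + |Y|)/n)^{k·|I|}. -/
open Finset
open scoped Classical

/-! Condition on the clauses outside `I`. As `Z` is disjoint from `I`, they determine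
`W = N(Φ_Z) ∪ Y`, a set of at most `k|Z| + |Y|` variables, and the event forces each of the
`k|I|` literals of the clauses in `I` to be one of the `2|W|` literals over `W`, out of `2n`. -/

section Counting

variable {ι β : Type*} [Fintype ι]

theorem card_le_pow_of_mem_of_eq_off (s : Finset (ι → β)) (g : ι → β) (I : Finset ι)
    (t : Finset β) (hs : ∀ f ∈ s, ∀ i, (i ∈ I → f i ∈ t) ∧ (i ∉ I → f i = g i)) :
    #s ≤ #t ^ #I :=
  calc #s ≤ #(Fintype.piFinset fun i => if i ∈ I then t else {g i}) := by
        refine card_le_card fun f hf => Fintype.mem_piFinset.2 fun i => ?_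
        split_ifs with hi
        · exact (hs f hf i).1 hi
        · exact mem_singleton.2 ((hs f hf i).2 hi)
    _ = #t ^ #I := by
        simp [Fintype.card_piFinset, apply_ite card, prod_ite_mem]

variable [Fintype β]

theorem card_mul_pow_le_of_card_fiber_le (s : Finset (ι → β)) (I : Finset ι) (c : ℕ)
    (h : ∀ g : ι → β, #{f ∈ s | ∀ i ∉ I, f i = g i} ≤ c) :
    #s * Fintype.card β ^ #I ≤ c * Fintype.card β ^ Fintype.card ι := by
  let r : (ι → β) → (↥Iᶜ → β) := fun f i => f i
  have hfiber : #s ≤ c * #(s.image r) := card_le_mul_card_image s c fun a ha => by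
    obtain ⟨g, -, rfl⟩ := mem_image.1 ha
    convert h g using 3 with f
    simp [r, funext_iff]
  have himage : #(s.image r) ≤ Fintype.card β ^ #Iᶜ :=
    (card_le_univ _).trans_eq (by rw [Fintype.card_fun, Fintype.card_coe])
  calc #s * Fintype.card β ^ #I ≤ c * Fintype.card β ^ #Iᶜ * Fintype.card β ^ #I := by
        gcongr; exact hfiber.trans (Nat.mul_le_mul_left c himage)
    _ = c * Fintype.card β ^ Fintype.card ι := by
        rw [mul_assoc, ← pow_add, card_compl_add_card]

theorem card_mul_pow_le_of_forall_mem (s : Finset (ι → β)) (I : Finset ι)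
    (t : (ι → β) → Finset β) (c : ℕ) (htc : ∀ g, #(t g) ≤ c)
    (ht : ∀ f g, (∀ i ∉ I, f i = g i) → t f = t g) (hst : ∀ f ∈ s, ∀ i ∈ I, f i ∈ t f) :
    #s * Fintype.card β ^ #I ≤ c ^ #I * Fintype.card β ^ Fintype.card ι := by
  refine card_mul_pow_le_of_card_fiber_le s I _ fun g => ?_
  calc _ ≤ #(t g) ^ #I := card_le_pow_of_mem_of_eq_off _ g I _ fun f hf i => by
        obtain ⟨hfs, hoff⟩ := mem_filter.1 hf
        exact ⟨fun hi => ht f g hoff ▸ hst f hfs i hi, hoff i⟩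
    _ ≤ c ^ #I := Nat.pow_le_pow_left (htc g) _

end Counting

section Formula

variable {n m k : ℕ}

theorem card_KFormula : Fintype.card (KFormula n m k) = ((2 * n) ^ k) ^ m := by
  simp [mul_comm]

theorem card_varsOf_le_s7 (Φ : KFormula n m k) (Z : Finset (Fin m)) : #(varsOf Φ Z) ≤ #Z * k :=
  card_biUnion_le_card_mul _ _ _ fun _ _ => card_image_le.trans_eq (card_fin k)

theorem varsOf_congr {Φ Ψ : KFormula n m k} {Z : Finset (Fin m)} (h : ∀ i ∈ Z, Φ i = Ψ i) :
    varsOf Φ Z = varsOf Ψ Z :=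
  biUnion_congr rfl fun i hi => by simp only [clauseVars, h i hi]

theorem mem_piFinset_of_clauseVars_subset {Φ : KFormula n m k} {i : Fin m} {W : Finset (Fin n)}
    (h : clauseVars Φ i ⊆ W) : Φ i ∈ Fintype.piFinset fun _ => W ×ˢ univ :=
  Fintype.mem_piFinset.2 fun j => mem_product.2 ⟨h (mem_image_of_mem _ (mem_univ j)), mem_univ _⟩

theorem card_clauses_inside_mul_le {Z I : Finset (Fin m)} (hZI : Disjoint Z I)
    (Y : Finset (Fin n)) :
    #{Φ : KFormula n m k | ∀ i ∈ I, clauseVars Φ i ⊆ varsOf Φ Z ∪ Y} * ((2 * n) ^ k) ^ #I ≤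
      ((2 * (k * #Z + #Y)) ^ k) ^ #I * ((2 * n) ^ k) ^ m := by
  have hclause : Fintype.card (Fin k → Fin n × Bool) = (2 * n) ^ k := by simp [mul_comm]
  rw [← hclause]
  refine (card_mul_pow_le_of_forall_mem _ I
    (fun Φ => Fintype.piFinset fun _ => (varsOf Φ Z ∪ Y) ×ˢ univ) ((2 * (k * #Z + #Y)) ^ k)
    (fun Φ => ?_) (fun Φ Ψ h => ?_) (fun Φ hΦ i hi => ?_)).trans_eq (by rw [Fintype.card_fin])
  · have hW : #(varsOf Φ Z ∪ Y) ≤ k * #Z + #Y :=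
      (card_union_le _ _).trans (by linarith [card_varsOf_le_s7 Φ Z])
    simp only [Fintype.card_piFinset, card_product, card_univ, Fintype.card_bool, prod_const,
      Fintype.card_fin]
    exact Nat.pow_le_pow_left (by omega) k
  · rw [varsOf_congr fun i hi => h i (disjoint_left.1 hZI hi)]
  · exact mem_piFinset_of_clauseVars_subset ((mem_filter.1 hΦ).2 i hi)

end Formula

theorem prob_clauses_inside_general {n m k : ℕ} (hn : 1 < n)
    (Z I : Finset (Fin m)) (hZI : Disjoint Z I) (Y : Finset (Fin n)) :
    probOf n m k (fun Φ => ∀ i ∈ I, clauseVars Φ i ⊆ varsOf Φ Z ∪ Y)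
      ≤ (((k * Z.card + Y.card : ℕ) : ℝ) / n) ^ (k * I.card) := by
  have hcount := card_clauses_inside_mul_le (k := k) hZI Y
  rw [probOf, filter_congr_decidable, card_KFormula]
  have hratio : (((k * #Z + #Y : ℕ) : ℝ) / n) ^ (k * #I) =
      (((2 * (k * #Z + #Y)) ^ k) ^ #I : ℕ) / (((2 * n) ^ k) ^ #I : ℕ) := by
    push_cast
    rw [← div_pow, ← div_pow, mul_div_mul_left _ _ two_ne_zero, pow_mul]
  rw [hratio, div_le_div_iff₀ (by positivity) (by positivity)]
  exact_mod_cast hcount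

/-- **First-moment bound in Lemma 2.4.** For disjoint sets of clause indices `Z, I` and a
set of variables `Y`, the probability that `N(Φ_i) ⊆ N(Φ_Z) ∪ Y` for all `i ∈ I` is at
most `((k|Z| + |Y|)/n)^{k|I|}`. -/
theorem prob_clauses_inside {n m k : ℕ} (hk : 3 ≤ k) (hn : 1 < n) (hm : 1 ≤ m)
    (Z I : Finset (Fin m)) (hZI : Disjoint Z I) (Y : Finset (Fin n)) :
    probOf n m k (fun Φ => ∀ i ∈ I, clauseVars Φ i ⊆ varsOf Φ Z ∪ Y)
      ≤ (((k * Z.card + Y.card : ℕ) : ℝ) / n) ^ (k * I.card) :=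
  prob_clauses_inside_general hn Z I hZI Y
end
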